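/- arXiv:2409.09624 — 9 statements merged into one kernel-verified Lean document; each statement's English description precedes it below -/
import Mathlib

section
/- Let Λ₀ > 1 and Λ₁, …, Λ_{p-1} ≥ 0 be real numbers. Define g₁(r) = Λ₀·(1 - Λ₀·r)/(Λ₀ - r) - Σ_{k=1}^{p-1} (k+1)·Λ_k·r^k. Then g₁ is strictly decreasing on [0,1], and there exists a unique ρ₁ ∈ (0, 1/Λ₀] with g₁(ρ₁) = 0. -/
/-!
The Möbius term `Λ₀(1 - Λ₀r)/(Λ₀ - r)` is strictly decreasing for `r < Λ₀` because `Λ₀² > 1`,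
and the subtracted polynomial has nonnegative coefficients, so `g₁` is strictly decreasing.
Since `g₁ 0 = 1 > 0` and the Möbius term vanishes at `1/Λ₀`, `g₁ (1/Λ₀) ≤ 0`; the intermediate
value theorem gives a zero in `(0, 1/Λ₀]`, unique by strict monotonicity.
-/

open Set

lemma strictAntiOn_mul_one_sub_mul_div_sub {a : ℝ} (ha : 1 < a) :
    StrictAntiOn (fun r => a * (1 - a * r) / (a - r)) (Iio a) := by
  intro x hx y hy hxy
  have hx' : 0 < a - x := sub_pos.mpr hx
  have hy' : 0 < a - y := sub_pos.mpr hy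
  rw [div_lt_div_iff₀ hy' hx']
  -- the cross-multiplied difference is `a (y - x) (a² - 1)`
  nlinarith [mul_pos (mul_pos (by linarith : (0 : ℝ) < a) (sub_pos.mpr hxy))
    (by nlinarith : (0 : ℝ) < a * a - 1)]

lemma monotoneOn_sum_mul_pow {R : Type*} [Semiring R] [PartialOrder R] [IsOrderedRing R]
    {s : Finset ℕ} {c : ℕ → R} (hc : ∀ k ∈ s, 0 ≤ c k) :
    MonotoneOn (fun r => ∑ k ∈ s, c k * r ^ k) (Ici 0) :=
  fun _ hx _ _ hxy => Finset.sum_le_sum fun k hk =>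
    mul_le_mul_of_nonneg_left (pow_le_pow_left₀ hx hxy k) (hc k hk)

lemma sum_mul_zero_pow {R : Type*} [Semiring R] {s : Finset ℕ} (hs : 0 ∉ s) (c : ℕ → R) :
    ∑ k ∈ s, c k * 0 ^ k = 0 :=
  Finset.sum_eq_zero fun k hk => by rw [zero_pow (ne_of_mem_of_not_mem hk hs), mul_zero]

lemma exists_mem_Ioc_eq_zero {f : ℝ → ℝ} {a b : ℝ} (hab : a ≤ b)
    (hf : ContinuousOn f (Icc a b)) (ha : 0 < f a) (hb : f b ≤ 0) :
    ∃ c ∈ Ioc a b, f c = 0 :=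
  intermediate_value_Ioc' hab hf ⟨hb, ha⟩

section

variable {a : ℝ} {s : Finset ℕ} {c : ℕ → ℝ}

lemma strictAntiOn_sub_sum_mul_pow (ha : 1 < a) (hc : ∀ k ∈ s, 0 ≤ c k) :
    StrictAntiOn (fun r => a * (1 - a * r) / (a - r) - ∑ k ∈ s, c k * r ^ k) (Ico 0 a) :=
  fun _ hx _ hy hxy => by
    linarith [strictAntiOn_mul_one_sub_mul_div_sub ha hx.2 hy.2 hxy,
      monotoneOn_sum_mul_pow hc hx.1 hy.1 hxy.le]

lemma continuousOn_sub_sum_mul_pow :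
    ContinuousOn (fun r => a * (1 - a * r) / (a - r) - ∑ k ∈ s, c k * r ^ k) (Iio a) :=
  ((by fun_prop : Continuous fun r => a * (1 - a * r)).continuousOn.div (by fun_prop)
    fun _ hr => (sub_pos.mpr hr).ne').sub (by fun_prop)

end

theorem stmt0_general (p : ℕ) (Λ : ℕ → ℝ) (hΛ0 : 1 < Λ 0)
    (hΛ : ∀ k ∈ Finset.Icc 1 (p - 1), 0 ≤ Λ k)
    (g₁ : ℝ → ℝ)
    (hg₁ : ∀ r, g₁ r = Λ 0 * (1 - Λ 0 * r) / (Λ 0 - r)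
      - ∑ k ∈ Finset.Icc 1 (p - 1), ((k : ℝ) + 1) * Λ k * r ^ k) :
    StrictAntiOn g₁ (Set.Icc 0 1) ∧
    ∃! ρ₁ : ℝ, ρ₁ ∈ Set.Ioc 0 (1 / Λ 0) ∧ g₁ ρ₁ = 0 := by
  have hc : ∀ k ∈ Finset.Icc 1 (p - 1), 0 ≤ ((k : ℝ) + 1) * Λ k :=
    fun k hk => mul_nonneg (by positivity) (hΛ k hk)
  have hanti : StrictAntiOn g₁ (Ico 0 (Λ 0)) := by
    rw [funext hg₁]; exact strictAntiOn_sub_sum_mul_pow hΛ0 hc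
  have hcont : ContinuousOn g₁ (Iio (Λ 0)) := by
    rw [funext hg₁]; exact continuousOn_sub_sum_mul_pow
  have hinv_lt_one : 1 / Λ 0 < 1 := (div_lt_one (by linarith)).mpr hΛ0
  have hIcc : Icc 0 1 ⊆ Ico 0 (Λ 0) := Icc_subset_Ico_right hΛ0
  have hIoc : Ioc 0 (1 / Λ 0) ⊆ Icc 0 1 := fun r hr => ⟨hr.1.le, hr.2.trans hinv_lt_one.le⟩
  refine ⟨hanti.mono hIcc, ?_⟩
  have hg₁_zero : 0 < g₁ 0 := by
    rw [hg₁, sum_mul_zero_pow (by simp)]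
    norm_num [div_self (by linarith : Λ 0 ≠ 0)]
  have hg₁_inv : g₁ (1 / Λ 0) ≤ 0 := by
    rw [hg₁, mul_one_div_cancel (by linarith), sub_self, mul_zero, zero_div, zero_sub,
      neg_nonpos]
    exact Finset.sum_nonneg fun k hk => mul_nonneg (hc k hk) (by positivity)
  obtain ⟨ρ, hρ, hρ_zero⟩ := exists_mem_Ioc_eq_zero (by positivity)
    (hcont.mono fun _ hr => (hr.2.trans_lt hinv_lt_one).trans hΛ0) hg₁_zero hg₁_inv
  exact ⟨ρ, ⟨hρ, hρ_zero⟩, fun y ⟨hy, hy_zero⟩ =>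
    hanti.injOn (hIcc (hIoc hy)) (hIcc (hIoc hρ)) (hy_zero.trans hρ_zero.symm)⟩

theorem stmt0 (p : ℕ) (hp : 0 < p) (Λ : ℕ → ℝ) (hΛ0 : 1 < Λ 0)
    (hΛ : ∀ k ∈ Finset.Icc 1 (p - 1), 0 ≤ Λ k)
    (g₁ : ℝ → ℝ)
    (hg₁ : ∀ r, g₁ r = Λ 0 * (1 - Λ 0 * r) / (Λ 0 - r)
      - ∑ k ∈ Finset.Icc 1 (p - 1), ((k : ℝ) + 1) * Λ k * r ^ k) :
    StrictAntiOn g₁ (Set.Icc 0 1) ∧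
    ∃! ρ₁ : ℝ, ρ₁ ∈ Set.Ioc 0 (1 / Λ 0) ∧ g₁ ρ₁ = 0 :=
  stmt0_general p Λ hΛ0 hΛ g₁ hg₁
end

section
/- Let H be analytic on the unit disk U with |H'(0)| = 1 and |H'(z)| < Λ for all z ∈ U, where Λ > 1. Then for all z₁, z₂ in the disk U_r = {|z| < r} with 0 < r < 1, one has |H(z₁) - H(z₂)| ≥ Λ·(1 - Λr)/(Λ - r)·|z₁ - z₂|. -/
/-!
Write `c = H'(0)`. The map `g = H' / Λ` sends the unit disk into itself with `|g 0| = 1/Λ`, so by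
the Schwarz–Pick lemma `g z` stays within pseudo-hyperbolic distance `r` of `g 0` when `|z| ≤ r`.
On that disk `Re (conj (g 0) * g z) ≥ ρ (ρ - r) / (1 - r ρ)` with `ρ = 1/Λ`, that is,
`Re (conj c * H'(z)) ≥ Λ (1 - Λ r) / (Λ - r)`. Integrating `conj c * H'` along the segment from
`z₂` to `z₁` then bounds `|H z₁ - H z₂| = |conj c * (H z₁ - H z₂)|` from below.
-/

open Complex ComplexConjugate Metric Set

theorem norm_sub_lt_norm_one_sub_conj_mul {a w : ℂ} (ha : ‖a‖ < 1) (hw : ‖w‖ < 1) :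
    ‖w - a‖ < ‖1 - conj a * w‖ := by
  have key : ‖1 - conj a * w‖ ^ 2 - ‖w - a‖ ^ 2 = (1 - ‖a‖ ^ 2) * (1 - ‖w‖ ^ 2) := by
    simp only [← normSq_eq_norm_sq, normSq_apply, sub_re, sub_im, mul_re, mul_im, one_re,
      one_im, conj_re, conj_im]
    ring
  refine lt_of_pow_lt_pow_left₀ 2 (norm_nonneg _) ?_
  nlinarith [mul_pos (sub_pos.2 (pow_lt_one₀ (norm_nonneg a) ha two_ne_zero))
    (sub_pos.2 (pow_lt_one₀ (norm_nonneg w) hw two_ne_zero))]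

theorem le_re_conj_mul_of_norm_sub_le_mul {a w : ℂ} {r : ℝ} (hr : 0 ≤ r) (ha : ‖a‖ ≤ 1)
    (hra : r * ‖a‖ < 1) (h : ‖w - a‖ ≤ r * ‖1 - conj a * w‖) :
    ‖a‖ * (‖a‖ - r) / (1 - r * ‖a‖) ≤ (conj a * w).re := by
  set ρ := ‖a‖
  set s := (conj a * w).re
  have hs : s ^ 2 ≤ ρ ^ 2 * ‖w‖ ^ 2 := by
    have := abs_re_le_norm (conj a * w)
    rw [norm_mul, RCLike.norm_conj] at this
    nlinarith [abs_nonneg s, sq_abs s]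
  have hsq : ‖w - a‖ ^ 2 ≤ r ^ 2 * ‖1 - conj a * w‖ ^ 2 := by
    nlinarith [norm_nonneg (w - a)]
  have e1 : ‖w - a‖ ^ 2 = ‖w‖ ^ 2 + ρ ^ 2 - 2 * s := by
    simp only [s, ρ, ← normSq_eq_norm_sq, normSq_apply, sub_re, sub_im, mul_re,
      conj_re, conj_im]
    ring
  have e2 : ‖1 - conj a * w‖ ^ 2 = 1 - 2 * s + ρ ^ 2 * ‖w‖ ^ 2 := by
    simp only [s, ρ, ← normSq_eq_norm_sq, normSq_apply, sub_re, sub_im, mul_re, mul_im,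
      one_re, one_im, conj_re, conj_im]
    ring
  -- eliminating `‖w‖` via `s² ≤ ρ² ‖w‖²` leaves a quadratic in `s` with roots `ρ(ρ ∓ r)/(1 ∓ rρ)`
  have hquad : ((1 - r * ρ) * s - ρ * (ρ - r)) * ((1 + r * ρ) * s - ρ * (ρ + r)) ≤ 0 := by
    rw [e1, e2] at hsq
    have hρr : 0 ≤ 1 - r ^ 2 * ρ ^ 2 := by nlinarith [mul_nonneg hr (norm_nonneg a)]
    nlinarith [mul_nonneg hρr (sub_nonneg.2 hs), mul_nonneg (sq_nonneg ρ) (sub_nonneg.2 hsq)]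
  have hρ : 0 ≤ ρ := norm_nonneg a
  rw [div_le_iff₀ (by linarith)]
  by_contra! hlt
  have hroots : (1 + r * ρ) * s < ρ * (ρ + r) := by
    nlinarith [mul_nonneg hr (sub_nonneg.2 ha), mul_nonneg hr hρ, mul_nonneg (mul_nonneg hr hρ) hρ]
  nlinarith [mul_pos (sub_pos.2 hlt) (sub_pos.2 hroots)]

theorem norm_sub_le_mul_norm_one_sub_conj_mul_of_mapsTo_ball {f : ℂ → ℂ}
    (hd : DifferentiableOn ℂ f (ball 0 1)) (hmaps : MapsTo f (ball 0 1) (ball 0 1)) {z : ℂ}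
    (hz : z ∈ ball 0 1) : ‖f z - f 0‖ ≤ ‖z‖ * ‖1 - conj (f 0) * f z‖ := by
  have hf0 : ‖f 0‖ < 1 := mem_ball_zero_iff.1 (hmaps (mem_ball_self one_pos))
  have hlt : ∀ w ∈ ball (0 : ℂ) 1, ‖f w - f 0‖ < ‖1 - conj (f 0) * f w‖ := fun w hw =>
    norm_sub_lt_norm_one_sub_conj_mul hf0 (mem_ball_zero_iff.1 (hmaps hw))
  have hden : ∀ w ∈ ball (0 : ℂ) 1, 1 - conj (f 0) * f w ≠ 0 := fun w hw =>
    norm_pos_iff.1 ((norm_nonneg _).trans_lt (hlt w hw))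
  have hschwarz := Complex.norm_le_norm_of_mapsTo_ball (R := 1)
    (f := fun w => (f w - f 0) / (1 - conj (f 0) * f w))
    ((hd.sub_const _).div ((hd.const_mul _).const_sub _) hden)
    (fun w hw => by
      rw [mem_closedBall_zero_iff, norm_div, div_le_one (norm_pos_iff.2 (hden w hw))]
      exact (hlt w hw).le)
    (by simp) (mem_ball_zero_iff.1 hz)
  rwa [norm_div, div_le_iff₀ (norm_pos_iff.2 (hden z hz))] at hschwarz

theorem le_re_conj_mul_of_mapsTo_ball {f : ℂ → ℂ} (hd : DifferentiableOn ℂ f (ball 0 1))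
    (hmaps : MapsTo f (ball 0 1) (ball 0 1)) {r : ℝ} (hr : r < 1) {z : ℂ} (hz : ‖z‖ ≤ r) :
    ‖f 0‖ * (‖f 0‖ - r) / (1 - r * ‖f 0‖) ≤ (conj (f 0) * f z).re := by
  have hf0 : ‖f 0‖ < 1 := mem_ball_zero_iff.1 (hmaps (mem_ball_self one_pos))
  have hr0 : 0 ≤ r := (norm_nonneg z).trans hz
  refine le_re_conj_mul_of_norm_sub_le_mul hr0 hf0.le (by nlinarith [norm_nonneg (f 0)]) ?_
  calc ‖f z - f 0‖ ≤ ‖z‖ * ‖1 - conj (f 0) * f z‖ :=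
        norm_sub_le_mul_norm_one_sub_conj_mul_of_mapsTo_ball hd hmaps
          (mem_ball_zero_iff.2 (hz.trans_lt hr))
    _ ≤ r * ‖1 - conj (f 0) * f z‖ := by gcongr

theorem mul_norm_sub_le_norm_sub_of_le_re_deriv {f f' : ℂ → ℂ} {s : Set ℂ} (hs : Convex ℝ s)
    (hf : ∀ z ∈ s, HasDerivAt f (f' z) z) {m : ℝ} (hm : ∀ z ∈ s, m ≤ (f' z).re) {x y : ℂ}
    (hx : x ∈ s) (hy : y ∈ s) : m * ‖y - x‖ ≤ ‖f y - f x‖ := by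
  rcases eq_or_ne x y with rfl | hxy
  · simp
  set u := y - x
  have hu : 0 < ‖u‖ := norm_pos_iff.2 (sub_ne_zero.2 hxy.symm)
  have hseg : ∀ t ∈ Icc (0 : ℝ) 1, x + t • u ∈ s := fun t ht => hs.add_smul_sub_mem hx hy ht
  have hφ : ∀ t ∈ Icc (0 : ℝ) 1, HasDerivAt (fun t : ℝ => (conj u * f (x + t • u)).re)
      (‖u‖ ^ 2 * (f' (x + t • u)).re) t := by
    intro t ht
    have hγ : HasDerivAt (fun t : ℝ => x + t • u) u t := by
      simpa using ((hasDerivAt_id t).smul_const u).const_add x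
    refine (reCLM.hasFDerivAt.comp_hasDerivAt t
      (((hf _ (hseg t ht)).scomp t hγ).const_mul (conj u))).congr_deriv ?_
    rw [reCLM_apply, smul_eq_mul, ← mul_assoc, conj_mul', ← ofReal_pow, re_ofReal_mul]
  have hmvt := (convex_Icc (0 : ℝ) 1).mul_sub_le_image_sub_of_le_deriv (C := m * ‖u‖ ^ 2)
    (fun t ht => (hφ t ht).continuousAt.continuousWithinAt)
    (fun t ht => (hφ t (interior_subset ht)).differentiableAt.differentiableWithinAt)
    (fun t ht => by
      rw [(hφ t (interior_subset ht)).deriv, mul_comm]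
      exact mul_le_mul_of_nonneg_left (hm _ (hseg t (interior_subset ht))) (by positivity))
    0 (left_mem_Icc.2 zero_le_one) 1 (right_mem_Icc.2 zero_le_one) zero_le_one
  have hre : (conj u * (f y - f x)).re ≤ ‖u‖ * ‖f y - f x‖ := by
    simpa only [norm_mul, RCLike.norm_conj] using re_le_norm (conj u * (f y - f x))
  simp only [zero_smul, one_smul, add_zero, sub_zero, mul_one, ← sub_re, ← mul_sub,
    show x + u = y from add_sub_cancel x y] at hmvt
  exact le_of_mul_le_mul_right (by linarith) hu

theorem le_re_conj_deriv_zero_mul_deriv {H : ℂ → ℂ} {Λ : ℝ} (hΛ : 1 < Λ)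
    (hH : DifferentiableOn ℂ H (ball 0 1)) (hH'0 : ‖deriv H 0‖ = 1)
    (hH' : ∀ z ∈ ball (0 : ℂ) 1, ‖deriv H z‖ < Λ) {r : ℝ} (hr : r < 1) {z : ℂ} (hz : ‖z‖ ≤ r) :
    Λ * (1 - Λ * r) / (Λ - r) ≤ (conj (deriv H 0) * deriv H z).re := by
  have hΛ0 : 0 < Λ := one_pos.trans hΛ
  set g : ℂ → ℂ := fun w => deriv H w / Λ
  have hg : DifferentiableOn ℂ g (ball 0 1) :=
    (hH.analyticOnNhd isOpen_ball).deriv.differentiableOn.div_const _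
  have hmaps : MapsTo g (ball 0 1) (ball 0 1) := fun w hw => by
    rw [mem_ball_zero_iff, norm_div, norm_real, Real.norm_of_nonneg hΛ0.le, div_lt_one hΛ0]
    exact hH' w hw
  have hg0 : ‖g 0‖ = Λ⁻¹ := by
    rw [norm_div, hH'0, norm_real, Real.norm_of_nonneg hΛ0.le, one_div]
  have hconj : conj (deriv H 0) * deriv H z = (Λ ^ 2 : ℝ) * (conj (g 0) * g z) := by
    have : (Λ : ℂ) ≠ 0 := ofReal_ne_zero.2 hΛ0.ne'
    simp only [g, map_div₀, conj_ofReal]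
    push_cast
    field_simp
  have key := le_re_conj_mul_of_mapsTo_ball hg hmaps hr hz
  rw [hg0] at key
  rw [hconj, re_ofReal_mul]
  calc Λ * (1 - Λ * r) / (Λ - r) = Λ ^ 2 * (Λ⁻¹ * (Λ⁻¹ - r) / (1 - r * Λ⁻¹)) := by
        have : Λ - r ≠ 0 := by linarith
        field_simp
    _ ≤ _ := by gcongr

theorem stmt4_general (H : ℂ → ℂ) (Λ : ℝ) (hΛ : 1 < Λ)
    (hH : DifferentiableOn ℂ H (Metric.ball 0 1))
    (hH'0 : ‖deriv H 0‖ = 1)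
    (hH' : ∀ z ∈ Metric.ball (0 : ℂ) 1, ‖deriv H z‖ < Λ)
    (r : ℝ) (hr1 : r < 1) :
    ∀ z₁ ∈ Metric.ball (0 : ℂ) r, ∀ z₂ ∈ Metric.ball (0 : ℂ) r,
      Λ * (1 - Λ * r) / (Λ - r) * ‖z₁ - z₂‖ ≤ ‖H z₁ - H z₂‖ := by
  intro z₁ hz₁ z₂ hz₂
  have hderiv : ∀ z ∈ ball (0 : ℂ) r, HasDerivAt (fun w => conj (deriv H 0) * H w)
      (conj (deriv H 0) * deriv H z) z := fun z hz =>
    (hH.differentiableAt (isOpen_ball.mem_nhds (ball_subset_ball hr1.le hz))).hasDerivAt.const_mul _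
  have hre : ∀ z ∈ ball (0 : ℂ) r,
      Λ * (1 - Λ * r) / (Λ - r) ≤ (conj (deriv H 0) * deriv H z).re :=
    fun z hz => le_re_conj_deriv_zero_mul_deriv hΛ hH hH'0 hH' hr1 (mem_ball_zero_iff.1 hz).le
  calc Λ * (1 - Λ * r) / (Λ - r) * ‖z₁ - z₂‖
      ≤ ‖conj (deriv H 0) * H z₁ - conj (deriv H 0) * H z₂‖ :=
        mul_norm_sub_le_norm_sub_of_le_re_deriv (convex_ball 0 r) hderiv hre hz₂ hz₁
    _ = ‖H z₁ - H z₂‖ := by rw [← mul_sub, norm_mul, RCLike.norm_conj, hH'0, one_mul]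

theorem stmt4 (H : ℂ → ℂ) (Λ : ℝ) (hΛ : 1 < Λ)
    (hH : DifferentiableOn ℂ H (Metric.ball 0 1))
    (hH'0 : ‖deriv H 0‖ = 1)
    (hH' : ∀ z ∈ Metric.ball (0 : ℂ) 1, ‖deriv H z‖ < Λ)
    (r : ℝ) (hr0 : 0 < r) (hr1 : r < 1) :
    ∀ z₁ ∈ Metric.ball (0 : ℂ) r, ∀ z₂ ∈ Metric.ball (0 : ℂ) r,
      Λ * (1 - Λ * r) / (Λ - r) * ‖z₁ - z₂‖ ≤ ‖H z₁ - H z₂‖ :=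
  stmt4_general H Λ hΛ hH hH'0 hH' r hr1
end

section
/- Suppose H is analytic on the unit disk U with H(0) = 0, |H'(0)| = 1 and |H(z)| < M on U for some M > 0, and write H(z) = Σ_{n≥1} a_n z^n. Then M ≥ 1 and |a_n| ≤ M - 1/M for all n ≥ 2. -/
/-!
Write `H z = z φ z` with `φ = dslope H 0`. By the Schwarz lemma `‖φ‖ ≤ M` on the disc, and
`φ 0 = a 1` has norm `1`, whence `1 ≤ M`. For `k ≥ 1`, averaging `φ` over the rotations by the
`k`-th roots of unity keeps exactly the coefficients of index divisible by `k`, so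
`F w = ∑ a (j k + 1) w ^ j` is again bounded by `M` on the disc. The Schwarz–Pick inequality at the
origin, `‖F' 0‖ ≤ M - ‖F 0‖ ^ 2 / M` (the Schwarz lemma for the Möbius transform
`M (F - F 0) / (M ^ 2 - conj (F 0) F)` of `F`), then reads `‖a (k + 1)‖ ≤ M - 1 / M`.
-/

open Metric Set Filter Topology Finset ComplexConjugate

theorem hasFPowerSeriesOnBall_ofScalars_of_hasSum {f : ℂ → ℂ} {a : ℕ → ℂ}
    (ha : ∀ z ∈ ball (0 : ℂ) 1, HasSum (fun n ↦ a n * z ^ n) (f z)) :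
    HasFPowerSeriesOnBall f (.ofScalars ℂ a) 0 1 := by
  refine ⟨?_, one_pos, fun {y} hy ↦ ?_⟩
  · refine ENNReal.le_of_forall_nnreal_lt fun r hr ↦ ?_
    refine FormalMultilinearSeries.le_radius_of_summable_norm _ ?_
    have hr : ((r : ℝ) : ℂ) ∈ ball (0 : ℂ) 1 := by simpa using hr
    simpa [FormalMultilinearSeries.ofScalars_norm] using (ha _ hr).summable.norm
  · rw [← ENNReal.coe_one, Metric.eball_coe, NNReal.coe_one] at hy
    simpa [FormalMultilinearSeries.ofScalars_apply_eq, mul_comm] using ha y hy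

theorem hasSum_dslope_of_hasSum {f : ℂ → ℂ} {a : ℕ → ℂ}
    (ha : ∀ z ∈ ball (0 : ℂ) 1, HasSum (fun n ↦ a n * z ^ n) (f z)) {z : ℂ}
    (hz : z ∈ ball (0 : ℂ) 1) :
    HasSum (fun n ↦ a (n + 1) * z ^ n) (dslope f 0 z) := by
  have hp := hasFPowerSeriesOnBall_ofScalars_of_hasSum ha
  rcases eq_or_ne z 0 with rfl | hz0
  · rw [dslope_same, hp.hasFPowerSeriesAt.deriv]
    simpa [FormalMultilinearSeries.ofScalars_apply_eq] using
      hasSum_single (f := fun n ↦ a (n + 1) * (0 : ℂ) ^ n) 0 fun n hn ↦ by simp [hn]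
  · have h0 : f 0 = a 0 := by simpa using (hp.coeff_zero fun _ ↦ 1).symm
    have := ((hasSum_nat_add_iff' 1).2 (ha z hz)).div_const z
    rw [dslope_of_ne _ hz0, slope_def_field, sub_zero, h0]
    simpa [pow_succ, mul_div_assoc, mul_div_cancel_right₀ _ hz0] using this

theorem IsPrimitiveRoot.sum_pow_pow_eq_ite {R : Type*} [CommRing R] [IsDomain R] {ζ : R} {k : ℕ}
    (hζ : IsPrimitiveRoot ζ k) (n : ℕ) :
    ∑ i ∈ range k, (ζ ^ i) ^ n = if k ∣ n then (k : R) else 0 := by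
  simp_rw [← pow_mul, mul_comm _ n, pow_mul]
  split_ifs with hkn
  · simp [(hζ.pow_eq_one_iff_dvd n).2 hkn]
  · have hne : ζ ^ n ≠ 1 := mt (hζ.pow_eq_one_iff_dvd n).1 hkn
    refine eq_zero_of_ne_zero_of_mul_left_eq_zero (sub_ne_zero_of_ne hne.symm) ?_
    rw [mul_neg_geom_sum, ← pow_mul, mul_comm, pow_mul, hζ.pow_eq_one, one_pow, sub_self]

section RootsOfUnityAverage

variable {G : ℂ → ℂ} {b : ℕ → ℂ} {k : ℕ}

theorem hasSum_average_rotations {ζ : ℂ} (hζ : IsPrimitiveRoot ζ k) (hk : 0 < k)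
    (hG : ∀ z ∈ ball (0 : ℂ) 1, HasSum (fun n ↦ b n * z ^ n) (G z)) {z : ℂ}
    (hz : z ∈ ball (0 : ℂ) 1) :
    HasSum (fun j ↦ b (j * k) * (z ^ k) ^ j) ((k : ℂ)⁻¹ * ∑ i ∈ range k, G (ζ ^ i * z)) := by
  have hrot : ∀ i, ζ ^ i * z ∈ ball (0 : ℂ) 1 := fun i ↦ by
    simpa [norm_mul, norm_pow, hζ.norm'_eq_one hk.ne'] using hz
  have hsum := (hasSum_sum fun i (_ : i ∈ range k) ↦ hG _ (hrot i)).mul_left (k : ℂ)⁻¹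
  have hfilter : (fun n ↦ (k : ℂ)⁻¹ * ∑ i ∈ range k, b n * (ζ ^ i * z) ^ n)
      = fun n ↦ if k ∣ n then b n * z ^ n else 0 := by
    funext n
    simp_rw [mul_pow, mul_left_comm (b n), ← Finset.sum_mul, hζ.sum_pow_pow_eq_ite]
    have hk' : (k : ℂ) ≠ 0 := Nat.cast_ne_zero.2 hk.ne'
    split_ifs <;> simp [hk']
  rw [hfilter] at hsum
  have hsupp : ∀ n ∉ Set.range (· * k), (if k ∣ n then b n * z ^ n else 0) = 0 := by
    rintro n hn
    rw [if_neg]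
    rintro ⟨j, rfl⟩
    exact hn ⟨j, mul_comm _ _⟩
  simpa [Function.comp_def, ← pow_mul, mul_comm k] using
    ((mul_left_injective₀ hk.ne').hasSum_iff hsupp).2 hsum

theorem exists_hasSum_coeff_mul_pow_norm_le {M : ℝ} (hk : 0 < k)
    (hG : ∀ z ∈ ball (0 : ℂ) 1, HasSum (fun n ↦ b n * z ^ n) (G z))
    (hGM : ∀ z ∈ ball (0 : ℂ) 1, ‖G z‖ ≤ M) {w : ℂ} (hw : w ∈ ball (0 : ℂ) 1) :
    ∃ s, HasSum (fun j ↦ b (j * k) * w ^ j) s ∧ ‖s‖ ≤ M := by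
  obtain ⟨z, rfl⟩ := IsAlgClosed.exists_pow_nat_eq w hk
  have hz : z ∈ ball (0 : ℂ) 1 := by
    simpa [norm_pow, pow_lt_one_iff_of_nonneg (norm_nonneg z) hk.ne'] using hw
  have hζ := Complex.isPrimitiveRoot_exp k hk.ne'
  refine ⟨_, hasSum_average_rotations hζ hk hG hz, ?_⟩
  calc ‖(k : ℂ)⁻¹ * ∑ i ∈ range k, G (_ ^ i * z)‖
      ≤ (k : ℝ)⁻¹ * ∑ i ∈ range k, M := by
        rw [norm_mul, norm_inv, Complex.norm_natCast]
        gcongr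
        refine (norm_sum_le _ _).trans (sum_le_sum fun i _ ↦ hGM _ ?_)
        simpa [norm_mul, norm_pow, hζ.norm'_eq_one hk.ne'] using hz
    _ = M := by simp [field]

end RootsOfUnityAverage

theorem mul_norm_sub_le_norm_sq_sub_conj_mul {M : ℝ} {b w : ℂ} (hb : ‖b‖ ≤ M) (hw : ‖w‖ ≤ M) :
    M * ‖w - b‖ ≤ ‖(M : ℂ) ^ 2 - conj b * w‖ := by
  have hM : 0 ≤ M := (norm_nonneg b).trans hb
  have key : ‖(M : ℂ) ^ 2 - conj b * w‖ ^ 2 - (M * ‖w - b‖) ^ 2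
      = (M ^ 2 - ‖w‖ ^ 2) * (M ^ 2 - ‖b‖ ^ 2) := by
    simp only [mul_pow, Complex.sq_norm, Complex.normSq_apply, Complex.sub_re, Complex.sub_im,
      Complex.mul_re, Complex.mul_im, Complex.conj_re, Complex.conj_im, ← Complex.ofReal_pow,
      Complex.ofReal_re, Complex.ofReal_im]
    ring
  have hprod : 0 ≤ (M ^ 2 - ‖w‖ ^ 2) * (M ^ 2 - ‖b‖ ^ 2) := by
    apply mul_nonneg <;> nlinarith [norm_nonneg w, norm_nonneg b]
  exact pow_le_pow_iff_left₀ (by positivity) (norm_nonneg _) two_ne_zero |>.1 (by linarith)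

section SchwarzPick

variable {f : ℂ → ℂ} {M : ℝ}

theorem norm_deriv_le_sub_sq_div_of_norm_lt (hf : DifferentiableOn ℂ f (ball 0 1))
    (hfM : ∀ z ∈ ball (0 : ℂ) 1, ‖f z‖ ≤ M) (h0 : ‖f 0‖ < M) :
    ‖deriv f 0‖ ≤ M - ‖f 0‖ ^ 2 / M := by
  have hM : 0 < M := (norm_nonneg _).trans_lt h0
  set D : ℂ → ℂ := fun z ↦ (M : ℂ) ^ 2 - conj (f 0) * f z
  have hD : ∀ z ∈ ball (0 : ℂ) 1, D z ≠ 0 := by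
    intro z hz hDz
    have h := congrArg norm (sub_eq_zero.1 hDz)
    simp only [norm_pow, Complex.norm_real, Real.norm_eq_abs, abs_of_pos hM, norm_mul,
      Complex.norm_conj] at h
    nlinarith [hfM z hz, norm_nonneg (f 0)]
  have hD0 : D 0 = ((M ^ 2 - ‖f 0‖ ^ 2 : ℝ) : ℂ) := by
    simp [D, Complex.conj_mul']
  have hD0pos : 0 < M ^ 2 - ‖f 0‖ ^ 2 := by nlinarith [norm_nonneg (f 0)]
  set ψ : ℂ → ℂ := fun z ↦ M * (f z - f 0) / D z
  have hψ : DifferentiableOn ℂ ψ (ball 0 1) :=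
    ((hf.sub_const _).const_mul _).div ((hf.const_mul _).const_sub _) hD
  have hmaps : MapsTo ψ (ball 0 1) (closedBall (ψ 0) 1) := by
    intro z hz
    rw [mem_closedBall, dist_eq_norm]
    simp only [ψ, sub_self, mul_zero, zero_div, sub_zero, norm_div, norm_mul, Complex.norm_real,
      Real.norm_eq_abs, abs_of_pos hM]
    rw [div_le_one (norm_pos_iff.2 (hD z hz))]
    exact mul_norm_sub_le_norm_sq_sub_conj_mul h0.le (hfM z hz)
  have hf0 : HasDerivAt f (deriv f 0) 0 :=
    (hf.differentiableAt (ball_mem_nhds 0 one_pos)).hasDerivAt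
  have hψ' : deriv ψ 0 = M * deriv f 0 / D 0 := by
    have hE : (M : ℂ) ^ 2 - conj (f 0) * f 0 ≠ 0 := hD 0 (mem_ball_self one_pos)
    have := ((hf0.sub_const (f 0)).const_mul (M : ℂ)).div
      ((hf0.const_mul (conj (f 0))).const_sub ((M : ℂ) ^ 2)) hE
    rw [show deriv ψ 0 = _ from this.deriv, sub_self, mul_zero, zero_mul, sub_zero]
    simp only [D]
    field_simp
  have hSchwarz := Complex.norm_deriv_le_div_of_mapsTo_ball hψ hmaps one_pos
  rw [hψ', hD0, norm_div, norm_mul, Complex.norm_real, Complex.norm_real, Real.norm_eq_abs,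
    Real.norm_eq_abs, abs_of_pos hM, abs_of_pos hD0pos, div_one, div_le_one hD0pos] at hSchwarz
  rw [show M - ‖f 0‖ ^ 2 / M = (M ^ 2 - ‖f 0‖ ^ 2) / M by field_simp, le_div_iff₀ hM]
  linarith

theorem norm_deriv_le_sub_sq_div (hM : 0 < M) (hf : DifferentiableOn ℂ f (ball 0 1))
    (hfM : ∀ z ∈ ball (0 : ℂ) 1, ‖f z‖ ≤ M) :
    ‖deriv f 0‖ ≤ M - ‖f 0‖ ^ 2 / M := by
  -- The Möbius transform degenerates when `‖f 0‖ = M`, so use every bound `M' > M` instead.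
  have hcont : Tendsto (fun M' ↦ M' - ‖f 0‖ ^ 2 / M') (𝓝[>] M) (𝓝 (M - ‖f 0‖ ^ 2 / M)) :=
    (continuousAt_id.sub (continuousAt_const.div continuousAt_id hM.ne')).continuousWithinAt
  refine ge_of_tendsto hcont (eventually_nhdsWithin_of_forall fun M' hM' ↦ ?_)
  exact norm_deriv_le_sub_sq_div_of_norm_lt hf (fun z hz ↦ (hfM z hz).trans hM'.le)
    ((hfM 0 (mem_ball_self one_pos)).trans_lt hM')

theorem norm_coeff_le_sub_sq_div {G : ℂ → ℂ} {b : ℕ → ℂ} (hM : 0 < M)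
    (hG : ∀ z ∈ ball (0 : ℂ) 1, HasSum (fun n ↦ b n * z ^ n) (G z))
    (hGM : ∀ z ∈ ball (0 : ℂ) 1, ‖G z‖ ≤ M) {k : ℕ} (hk : 0 < k) :
    ‖b k‖ ≤ M - ‖b 0‖ ^ 2 / M := by
  set F : ℂ → ℂ := fun w ↦ ∑' j, b (j * k) * w ^ j
  have hF : ∀ w ∈ ball (0 : ℂ) 1, HasSum (fun j ↦ b (j * k) * w ^ j) (F w) ∧ ‖F w‖ ≤ M := by
    intro w hw
    obtain ⟨s, hs, hsM⟩ := exists_hasSum_coeff_mul_pow_norm_le hk hG hGM hw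
    rw [show F w = s from hs.tsum_eq]
    exact ⟨hs, hsM⟩
  have hFps := hasFPowerSeriesOnBall_ofScalars_of_hasSum fun w hw ↦ (hF w hw).1
  have hFdiff : DifferentiableOn ℂ F (ball 0 1) := by
    simpa [← ENNReal.coe_one, Metric.eball_coe] using hFps.differentiableOn
  have hF0 : F 0 = b 0 := by simpa using (hFps.coeff_zero fun _ ↦ 1).symm
  have hF'0 : deriv F 0 = b k := by
    simpa [FormalMultilinearSeries.ofScalars_apply_eq] using hFps.hasFPowerSeriesAt.deriv
  simpa [hF0, hF'0] using norm_deriv_le_sub_sq_div hM hFdiff fun w hw ↦ (hF w hw).2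

end SchwarzPick

theorem stmt5 (H : ℂ → ℂ) (M : ℝ) (hM : 0 < M) (a : ℕ → ℂ)
    (hH : DifferentiableOn ℂ H (Metric.ball 0 1))
    (hH0 : H 0 = 0)
    (hH'0 : ‖deriv H 0‖ = 1)
    (hHM : ∀ z ∈ Metric.ball (0 : ℂ) 1, ‖H z‖ < M)
    (ha : ∀ z ∈ Metric.ball (0 : ℂ) 1, HasSum (fun n : ℕ => a n * z ^ n) (H z)) :
    1 ≤ M ∧ ∀ n, 2 ≤ n → ‖a n‖ ≤ M - 1 / M := by
  have hmaps : MapsTo H (ball 0 1) (closedBall (H 0) M) := fun z hz ↦ by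
    simpa [hH0] using (hHM z hz).le
  have hslope : ∀ z ∈ ball (0 : ℂ) 1, ‖dslope H 0 z‖ ≤ M := fun z hz ↦ by
    simpa using Complex.norm_dslope_le_div_of_mapsTo_ball hH hmaps hz
  have ha1 : ‖a 1‖ = 1 := by
    rw [← hH'0, (hasFPowerSeriesOnBall_ofScalars_of_hasSum ha).hasFPowerSeriesAt.deriv]
    simp
  refine ⟨by simpa [hH'0] using hslope 0 (mem_ball_self one_pos), fun n hn ↦ ?_⟩
  obtain ⟨k, rfl⟩ : ∃ k, n = k + 1 := ⟨n - 1, by omega⟩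
  simpa [ha1] using norm_coeff_le_sub_sq_div hM (fun z hz ↦ hasSum_dslope_of_hasSum ha hz) hslope
    (k := k) (by omega)
end

section
/- Let Λ₁, …, Λ_{p-1} ≥ 0 with Σ_{k=1}^{p-1} (k+1)Λ_k ≤ 1, and let F(z) = z + Σ_{k=1}^{p-1} conj(z)^k A_k(z), where each A_k is analytic on the unit disk U with A_k(0) = 0 and |A_k'(z)| ≤ Λ_k on U. Then F is injective on U. -/
/-!
On the disk of radius `r < 1`, `A_k` is `Λ_k`-Lipschitz with `|A_k| ≤ Λ_k r` (as `A_k(0) = 0`) and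
`z ↦ conj(z)^k` is `k r^(k-1)`-Lipschitz, so `conj(z)^k A_k(z)` is `(k+1) Λ_k r`-Lipschitz there.
Hence the perturbation `F - id` is `r`-Lipschitz on that disk, and a strict contraction cannot
cancel the identity: `F z = F w` forces `|z - w| ≤ r |z - w|`, i.e. `z = w`.
-/

open Metric ComplexConjugate

theorem Set.injOn_add_of_norm_sub_lt {E : Type*} [NormedAddCommGroup E] {g : E → E} {s : Set E}
    (hg : ∀ z ∈ s, ∀ w ∈ s, z ≠ w → ‖g z - g w‖ < ‖z - w‖) :
    Set.InjOn (fun z => z + g z) s := by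
  intro z hz w hw hzw
  by_contra hne
  have hsub : z - w = -(g z - g w) := by
    rw [neg_sub]
    exact sub_eq_sub_iff_add_eq_add.2 (by rw [add_comm (g w)]; exact hzw)
  exact (hg z hz w hw hne).ne (by rw [hsub, norm_neg])

theorem norm_pow_sub_pow_le {𝕜 : Type*} [RCLike 𝕜] {x y : 𝕜} {r : ℝ}
    (hx : ‖x‖ ≤ r) (hy : ‖y‖ ≤ r) (k : ℕ) :
    ‖x ^ k - y ^ k‖ ≤ k * r ^ (k - 1) * ‖x - y‖ := by
  refine Convex.norm_image_sub_le_of_norm_deriv_le (f := fun t : 𝕜 => t ^ k)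
    (fun t _ => differentiableAt_pow k) (fun t ht => ?_) (convex_closedBall 0 r)
    (mem_closedBall_zero_iff.2 hy) (mem_closedBall_zero_iff.2 hx)
  rw [deriv_pow_field, norm_mul, norm_pow, RCLike.norm_natCast]
  gcongr
  exact mem_closedBall_zero_iff.1 ht

theorem norm_pow_mul_sub_pow_mul_le {𝕜 : Type*} [RCLike 𝕜] {a b u v : 𝕜} {r Λ : ℝ} {k : ℕ}
    (hk : 1 ≤ k) (ha : ‖a‖ ≤ r) (hb : ‖b‖ ≤ r) (hr : r ≤ 1)
    (huv : ‖u - v‖ ≤ Λ * ‖a - b‖) (hv : ‖v‖ ≤ Λ * r) :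
    ‖a ^ k * u - b ^ k * v‖ ≤ (k + 1) * Λ * r * ‖a - b‖ := by
  have hr0 : 0 ≤ r := (norm_nonneg a).trans ha
  have hΛd : 0 ≤ Λ * ‖a - b‖ := (norm_nonneg _).trans huv
  have hrk : r ^ k ≤ r := pow_le_of_le_one hr0 hr (by omega)
  have hrk' : r ^ (k - 1) ≤ 1 := pow_le_one₀ hr0 hr
  calc ‖a ^ k * u - b ^ k * v‖ = ‖a ^ k * (u - v) + (a ^ k - b ^ k) * v‖ := by ring_nf
    _ ≤ ‖a‖ ^ k * ‖u - v‖ + ‖a ^ k - b ^ k‖ * ‖v‖ := by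
      rw [← norm_pow, ← norm_mul, ← norm_mul]
      exact norm_add_le _ _
    _ ≤ r ^ k * (Λ * ‖a - b‖) + (k * r ^ (k - 1) * ‖a - b‖) * (Λ * r) := by
      gcongr
      exact norm_pow_sub_pow_le ha hb k
    _ ≤ r * (Λ * ‖a - b‖) + (k * 1 * ‖a - b‖) * (Λ * r) := by
      have h1 := mul_le_mul_of_nonneg_right hrk hΛd
      have h2 := mul_le_mul_of_nonneg_right hrk' (by positivity : 0 ≤ (k : ℝ) * r * (Λ * ‖a - b‖))
      linear_combination h1 + h2
    _ = (k + 1) * Λ * r * ‖a - b‖ := by ring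

theorem norm_conj_pow_mul_sub_conj_pow_mul_le {A : ℂ → ℂ} {Λ : ℝ}
    (hA : DifferentiableOn ℂ A (ball 0 1)) (hA0 : A 0 = 0)
    (hA' : ∀ z ∈ ball (0 : ℂ) 1, ‖deriv A z‖ ≤ Λ) {k : ℕ} (hk : 1 ≤ k)
    {z w : ℂ} (hz : z ∈ ball 0 1) (hw : w ∈ ball 0 1) :
    ‖conj z ^ k * A z - conj w ^ k * A w‖ ≤ (k + 1) * Λ * max ‖z‖ ‖w‖ * ‖z - w‖ := by
  have hlip : ∀ x ∈ ball (0 : ℂ) 1, ∀ y ∈ ball (0 : ℂ) 1, ‖A y - A x‖ ≤ Λ * ‖y - x‖ :=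
    fun x hx y hy => Convex.norm_image_sub_le_of_norm_deriv_le
      (fun t ht => (hA t ht).differentiableAt (isOpen_ball.mem_nhds ht)) hA' (convex_ball 0 1) hx hy
  have hΛ : 0 ≤ Λ := (norm_nonneg _).trans (hA' 0 (mem_ball_self one_pos))
  have hAw : ‖A w‖ ≤ Λ * max ‖z‖ ‖w‖ := by
    have := hlip 0 (mem_ball_self one_pos) w hw
    rw [hA0, sub_zero, sub_zero] at this
    exact this.trans (mul_le_mul_of_nonneg_left (le_max_right _ _) hΛ)
  have hconj : ‖conj z - conj w‖ = ‖z - w‖ := by rw [← map_sub, RCLike.norm_conj]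
  rw [← hconj]
  refine norm_pow_mul_sub_pow_mul_le hk ?_ ?_ ?_ ?_ hAw
  · rw [RCLike.norm_conj]; exact le_max_left _ _
  · rw [RCLike.norm_conj]; exact le_max_right _ _
  · exact max_le (mem_ball_zero_iff.1 hz).le (mem_ball_zero_iff.1 hw).le
  · rw [hconj]; exact hlip w hw z hz

theorem norm_sum_conj_pow_mul_sub_le (s : Finset ℕ) (hs : ∀ k ∈ s, 1 ≤ k) (Λ : ℕ → ℝ)
    (hsum : ∑ k ∈ s, ((k : ℝ) + 1) * Λ k ≤ 1) (A : ℕ → ℂ → ℂ)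
    (hA : ∀ k ∈ s, DifferentiableOn ℂ (A k) (ball 0 1)) (hA0 : ∀ k ∈ s, A k 0 = 0)
    (hA' : ∀ k ∈ s, ∀ z ∈ ball (0 : ℂ) 1, ‖deriv (A k) z‖ ≤ Λ k)
    {z w : ℂ} (hz : z ∈ ball 0 1) (hw : w ∈ ball 0 1) :
    ‖∑ k ∈ s, conj z ^ k * A k z - ∑ k ∈ s, conj w ^ k * A k w‖ ≤ max ‖z‖ ‖w‖ * ‖z - w‖ := by
  have hd : 0 ≤ max ‖z‖ ‖w‖ * ‖z - w‖ := by positivity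
  calc ‖∑ k ∈ s, conj z ^ k * A k z - ∑ k ∈ s, conj w ^ k * A k w‖
      ≤ ∑ k ∈ s, ((k : ℝ) + 1) * Λ k * (max ‖z‖ ‖w‖ * ‖z - w‖) := by
        rw [← Finset.sum_sub_distrib]
        refine norm_sum_le_of_le s fun k hk => ?_
        rw [← mul_assoc]
        exact norm_conj_pow_mul_sub_conj_pow_mul_le (hA k hk) (hA0 k hk) (hA' k hk) (hs k hk) hz hw
    _ = (∑ k ∈ s, ((k : ℝ) + 1) * Λ k) * (max ‖z‖ ‖w‖ * ‖z - w‖) := (Finset.sum_mul ..).symm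
    _ ≤ max ‖z‖ ‖w‖ * ‖z - w‖ := mul_le_of_le_one_left hd hsum

theorem stmt8_general (p : ℕ) (Λ : ℕ → ℝ)
    (hsum : ∑ k ∈ Finset.Icc 1 (p - 1), ((k : ℝ) + 1) * Λ k ≤ 1)
    (A : ℕ → ℂ → ℂ)
    (hA : ∀ k ∈ Finset.Icc 1 (p - 1), DifferentiableOn ℂ (A k) (Metric.ball 0 1))
    (hA0 : ∀ k ∈ Finset.Icc 1 (p - 1), A k 0 = 0)
    (hAk' : ∀ k ∈ Finset.Icc 1 (p - 1), ∀ z ∈ Metric.ball (0 : ℂ) 1,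
      ‖deriv (A k) z‖ ≤ Λ k)
    (F : ℂ → ℂ)
    (hF : ∀ z, F z = z + ∑ k ∈ Finset.Icc 1 (p - 1), (starRingEnd ℂ z) ^ k * A k z) :
    Set.InjOn F (Metric.ball 0 1) := by
  rw [show F = _ from funext hF]
  refine Set.injOn_add_of_norm_sub_lt fun z hz w hw hne => ?_
  calc _ ≤ max ‖z‖ ‖w‖ * ‖z - w‖ :=
        norm_sum_conj_pow_mul_sub_le _ (fun k hk => (Finset.mem_Icc.1 hk).1) Λ hsum A hA hA0 hAk'
          hz hw
    _ < ‖z - w‖ := mul_lt_of_lt_one_left (norm_pos_iff.2 (sub_ne_zero.2 hne))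
        (max_lt (mem_ball_zero_iff.1 hz) (mem_ball_zero_iff.1 hw))

theorem stmt8 (p : ℕ) (hp : 0 < p) (Λ : ℕ → ℝ)
    (hΛ : ∀ k ∈ Finset.Icc 1 (p - 1), 0 ≤ Λ k)
    (hsum : ∑ k ∈ Finset.Icc 1 (p - 1), ((k : ℝ) + 1) * Λ k ≤ 1)
    (A : ℕ → ℂ → ℂ)
    (hA : ∀ k ∈ Finset.Icc 1 (p - 1), DifferentiableOn ℂ (A k) (Metric.ball 0 1))
    (hA0 : ∀ k ∈ Finset.Icc 1 (p - 1), A k 0 = 0)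
    (hAk' : ∀ k ∈ Finset.Icc 1 (p - 1), ∀ z ∈ Metric.ball (0 : ℂ) 1,
      ‖deriv (A k) z‖ ≤ Λ k)
    (F : ℂ → ℂ)
    (hF : ∀ z, F z = z + ∑ k ∈ Finset.Icc 1 (p - 1), (starRingEnd ℂ z) ^ k * A k z) :
    Set.InjOn F (Metric.ball 0 1) :=
  stmt8_general p Λ hsum A hA hA0 hAk' F hF
end

section
/- For the function F₂(z) = z - Σ_{k=1}^{p-1} Λ_k conj(z)^k z (with Λ₁,…,Λ_{p-1} ≥ 0 and Σ_{k=1}^{p-1}(k+1)Λ_k > 1, and ρ₂ ∈ (0,1) the root of Σ(k+1)Λ_k r^k = 1), F₂ is not injective on any disk {|z| < r} with ρ₂ < r ≤ 1. -/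
/-!
On the real axis `F₂` is the real function `g x = x - ∑ Λₖ x^(k+1)`, whose derivative
`1 - ∑ (k+1) Λₖ x^k` is nonnegative on `[0, ρ₂]` and nonpositive on `[ρ₂, ∞)`. So `g` rises on
`[0, ρ₂]` and falls beyond `ρ₂`; a continuous function with an interior turning point cannot be
injective on an interval around it, and for `ρ₂ < b < r` the interval `[0, b]` lies in the disk.
-/

open Set

theorem not_injOn_Icc_of_monotoneOn_of_antitoneOn {α δ : Type*}
    [ConditionallyCompleteLinearOrder α] [TopologicalSpace α] [OrderTopology α] [DenselyOrdered α]
    [LinearOrder δ] [TopologicalSpace δ] [OrderClosedTopology δ] {f : α → δ} {a m b : α}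
    (ham : a < m) (hmb : m < b) (hf : ContinuousOn f (Icc a b))
    (hmono : MonotoneOn f (Icc a m)) (hanti : AntitoneOn f (Icc m b)) :
    ¬ InjOn f (Icc a b) := by
  intro hinj
  have hab : a ≤ b := (ham.trans hmb).le
  have hm : m ∈ Icc a b := ⟨ham.le, hmb.le⟩
  rcases hf.strictMonoOn_of_injOn_Icc' hab hinj with hstrict | hstrict
  · exact (hstrict hm (right_mem_Icc.2 hab) hmb).not_ge (hanti (left_mem_Icc.2 hmb.le) (right_mem_Icc.2 hmb.le) hmb.le)
  · exact (hstrict (left_mem_Icc.2 hab) hm ham).not_ge (hmono (left_mem_Icc.2 ham.le) (right_mem_Icc.2 ham.le) ham.le)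

section RealProfile

variable (s : Finset ℕ) (c : ℕ → ℝ)

theorem hasDerivAt_sub_sum_mul_pow (x : ℝ) :
    HasDerivAt (fun x : ℝ => x - ∑ k ∈ s, c k * x ^ (k + 1))
      (1 - ∑ k ∈ s, ((k : ℝ) + 1) * c k * x ^ k) x := by
  have hsum : HasDerivAt (fun x : ℝ => ∑ k ∈ s, c k * x ^ (k + 1))
      (∑ k ∈ s, c k * ((k + 1 : ℕ) * x ^ k)) x :=
    HasDerivAt.fun_sum fun k _ => (hasDerivAt_pow (k + 1) x).const_mul (c k)
  refine ((hasDerivAt_id x).fun_sub hsum).congr_deriv ?_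
  congr 1
  refine Finset.sum_congr rfl fun k _ => ?_
  push_cast
  ring

variable {s c}

theorem sum_mul_pow_le_sum_mul_pow (hc : ∀ k ∈ s, 0 ≤ c k) {x y : ℝ} (hx : 0 ≤ x) (hxy : x ≤ y) :
    ∑ k ∈ s, ((k : ℝ) + 1) * c k * x ^ k ≤ ∑ k ∈ s, ((k : ℝ) + 1) * c k * y ^ k :=
  Finset.sum_le_sum fun k hk => by have := hc k hk; gcongr

variable {ρ : ℝ}

theorem monotoneOn_sub_sum_mul_pow (hc : ∀ k ∈ s, 0 ≤ c k)
    (hroot : ∑ k ∈ s, ((k : ℝ) + 1) * c k * ρ ^ k = 1) :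
    MonotoneOn (fun x : ℝ => x - ∑ k ∈ s, c k * x ^ (k + 1)) (Icc 0 ρ) := by
  refine monotoneOn_of_hasDerivWithinAt_nonneg (convex_Icc 0 ρ)
    (fun x _ => (hasDerivAt_sub_sum_mul_pow s c x).continuousAt.continuousWithinAt)
    (fun x _ => (hasDerivAt_sub_sum_mul_pow s c x).hasDerivWithinAt) fun x hx => ?_
  rw [interior_Icc] at hx
  linarith [sum_mul_pow_le_sum_mul_pow hc hx.1.le hx.2.le]

theorem antitoneOn_sub_sum_mul_pow (hc : ∀ k ∈ s, 0 ≤ c k) (hρ : 0 ≤ ρ)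
    (hroot : ∑ k ∈ s, ((k : ℝ) + 1) * c k * ρ ^ k = 1) :
    AntitoneOn (fun x : ℝ => x - ∑ k ∈ s, c k * x ^ (k + 1)) (Ici ρ) := by
  refine antitoneOn_of_hasDerivWithinAt_nonpos (convex_Ici ρ)
    (fun x _ => (hasDerivAt_sub_sum_mul_pow s c x).continuousAt.continuousWithinAt)
    (fun x _ => (hasDerivAt_sub_sum_mul_pow s c x).hasDerivWithinAt) fun x hx => ?_
  rw [interior_Ici] at hx
  linarith [sum_mul_pow_le_sum_mul_pow hc hρ (le_of_lt hx)]

end RealProfile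

theorem ofReal_sub_sum_mul_conj_pow_mul (s : Finset ℕ) (c : ℕ → ℝ) (x : ℝ) :
    (x : ℂ) - ∑ k ∈ s, (c k : ℂ) * (starRingEnd ℂ x) ^ k * x =
      ((x - ∑ k ∈ s, c k * x ^ (k + 1) : ℝ) : ℂ) := by
  push_cast
  simp only [Complex.conj_ofReal, mul_assoc, ← pow_succ]

theorem stmt10_general (p : ℕ) (Λ : ℕ → ℝ)
    (hΛ : ∀ k ∈ Finset.Icc 1 (p - 1), 0 ≤ Λ k)
    (ρ₂ : ℝ) (hρ₂ : ρ₂ ∈ Set.Ioo (0 : ℝ) 1)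
    (hroot : ∑ k ∈ Finset.Icc 1 (p - 1), ((k : ℝ) + 1) * Λ k * ρ₂ ^ k = 1)
    (F₂ : ℂ → ℂ)
    (hF₂ : ∀ z, F₂ z = z - ∑ k ∈ Finset.Icc 1 (p - 1),
      ((Λ k : ℝ) : ℂ) * (starRingEnd ℂ z) ^ k * z) :
    ∀ r : ℝ, ρ₂ < r → r ≤ 1 → ¬ Set.InjOn F₂ (Metric.ball 0 r) := by
  intro r hρr _ hinj
  set g : ℝ → ℝ := fun x => x - ∑ k ∈ Finset.Icc 1 (p - 1), Λ k * x ^ (k + 1)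
  obtain ⟨b, hρb, hbr⟩ := exists_between hρr
  have hmaps : MapsTo ((↑) : ℝ → ℂ) (Icc 0 b) (Metric.ball 0 r) := fun x hx => by
    rw [mem_ball_zero_iff, Complex.norm_real, Real.norm_of_nonneg hx.1]
    exact hx.2.trans_lt hbr
  have hFg : F₂ ∘ ((↑) : ℝ → ℂ) = ((↑) : ℝ → ℂ) ∘ g :=
    funext fun x => (hF₂ x).trans (ofReal_sub_sum_mul_conj_pow_mul _ _ x)
  have hg : InjOn g (Icc 0 b) := by
    have := hinj.comp Complex.ofReal_injective.injOn hmaps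
    rw [hFg] at this
    exact this.of_comp
  exact not_injOn_Icc_of_monotoneOn_of_antitoneOn hρ₂.1 hρb
    (fun x _ => (hasDerivAt_sub_sum_mul_pow _ _ x).continuousAt.continuousWithinAt)
    (monotoneOn_sub_sum_mul_pow hΛ hroot)
    ((antitoneOn_sub_sum_mul_pow hΛ hρ₂.1.le hroot).mono Icc_subset_Ici_self) hg

theorem stmt10 (p : ℕ) (hp : 0 < p) (Λ : ℕ → ℝ)
    (hΛ : ∀ k ∈ Finset.Icc 1 (p - 1), 0 ≤ Λ k)
    (hsum : 1 < ∑ k ∈ Finset.Icc 1 (p - 1), ((k : ℝ) + 1) * Λ k)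
    (ρ₂ : ℝ) (hρ₂ : ρ₂ ∈ Set.Ioo (0 : ℝ) 1)
    (hroot : ∑ k ∈ Finset.Icc 1 (p - 1), ((k : ℝ) + 1) * Λ k * ρ₂ ^ k = 1)
    (F₂ : ℂ → ℂ)
    (hF₂ : ∀ z, F₂ z = z - ∑ k ∈ Finset.Icc 1 (p - 1),
      ((Λ k : ℝ) : ℂ) * (starRingEnd ℂ z) ^ k * z) :
    ∀ r : ℝ, ρ₂ < r → r ≤ 1 → ¬ Set.InjOn F₂ (Metric.ball 0 r) :=
  stmt10_general p Λ hΛ ρ₂ hρ₂ hroot F₂ hF₂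
end

section
/- Suppose Λ₀ > 1, Λ₁,…,Λ_{p-1} ≥ 0, and ρ₁ ∈ (0, 1/Λ₀] is the unique root of Λ₀(1-Λ₀r)/(Λ₀-r) - Σ_{k=1}^{p-1}(k+1)Λ_k r^k = 0. Let σ₁ = Λ₀²ρ₁ - Σ_{k=1}^{p-1} Λ_k ρ₁^{k+1} + (Λ₀³-Λ₀)ln(1 - ρ₁/Λ₀). Then 0 < σ₁ < 1; in fact σ₁ < 1/Λ₀. -/
/-!
Write `L = Λ₀`, `r = ρ₁`. The two elementary bounds `1 - 1/y < log y < y - 1` at `y = 1 - r/L`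
trap the logarithmic term of `σ₁`. The upper bound gives `σ₁ < r - Σ Λ_k r^(k+1) ≤ r ≤ 1/L`.
The lower bound, combined with the defining equation of `r`, gives
`σ₁ > r Σ (k+1) Λ_k r^k - Σ Λ_k r^(k+1)`, which is nonnegative because `k + 1 ≥ 2` for `k ≥ 1`.
-/

open Finset Real

lemma Real.one_sub_inv_lt_log {y : ℝ} (hy : 0 < y) (hy1 : y ≠ 1) : 1 - y⁻¹ < log y := by
  have h := log_lt_sub_one_of_pos (inv_pos.mpr hy) (inv_ne_one.mpr hy1)
  rw [log_inv] at h
  linarith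

lemma Real.neg_div_sub_lt_log_one_sub_div {r L : ℝ} (hr : 0 < r) (hrL : r < L) :
    -(r / (L - r)) < log (1 - r / L) := by
  have hL : 0 < L := hr.trans hrL
  have hy : 0 < 1 - r / L := sub_pos.mpr ((div_lt_one hL).mpr hrL)
  have hy1 : 1 - r / L ≠ 1 := by simp [hr.ne', hL.ne']
  convert one_sub_inv_lt_log hy hy1 using 1
  field_simp [(sub_pos.mpr hrL).ne']
  ring

lemma Real.log_one_sub_div_lt {r L : ℝ} (hr : 0 < r) (hrL : r < L) :
    log (1 - r / L) < -(r / L) := by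
  have hL : 0 < L := hr.trans hrL
  have hy1 : 1 - r / L ≠ 1 := by simp [hr.ne', hL.ne']
  have h := log_lt_sub_one_of_pos (sub_pos.mpr ((div_lt_one hL).mpr hrL)) hy1
  linarith

lemma two_mul_sum_mul_pow_succ_le {s : Finset ℕ} {a : ℕ → ℝ} {r : ℝ} (hr : 0 ≤ r)
    (hs : ∀ k ∈ s, 1 ≤ k) (ha : ∀ k ∈ s, 0 ≤ a k) :
    2 * ∑ k ∈ s, a k * r ^ (k + 1) ≤ r * ∑ k ∈ s, ((k : ℝ) + 1) * a k * r ^ k := by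
  rw [mul_sum, mul_sum]
  refine sum_le_sum fun k hk => ?_
  have hk1 : (1 : ℝ) ≤ k := by exact_mod_cast hs k hk
  have h := mul_nonneg (mul_nonneg (sub_nonneg.mpr hk1) (ha k hk)) (pow_nonneg hr (k + 1))
  rw [pow_succ] at h ⊢
  linarith

theorem stmt12_general (p : ℕ) (Λ : ℕ → ℝ) (hΛ0 : 1 < Λ 0)
    (hΛ : ∀ k ∈ Finset.Icc 1 (p - 1), 0 ≤ Λ k)
    (ρ₁ : ℝ) (hρ₁ : ρ₁ ∈ Set.Ioc 0 (1 / Λ 0))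
    (hroot : Λ 0 * (1 - Λ 0 * ρ₁) / (Λ 0 - ρ₁)
      = ∑ k ∈ Finset.Icc 1 (p - 1), ((k : ℝ) + 1) * Λ k * ρ₁ ^ k)
    (σ₁ : ℝ)
    (hσ₁ : σ₁ = (Λ 0) ^ 2 * ρ₁
      - (∑ k ∈ Finset.Icc 1 (p - 1), Λ k * ρ₁ ^ (k + 1))
      + ((Λ 0) ^ 3 - Λ 0) * Real.log (1 - ρ₁ / Λ 0)) :
    0 < σ₁ ∧ σ₁ < 1 / Λ 0 ∧ σ₁ < 1 := by
  obtain ⟨hr, hrL⟩ := hρ₁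
  set L := Λ 0
  have hL : 0 < L := by linarith
  have hL1 : 1 / L < 1 := (div_lt_one hL).mpr hΛ0
  have hr_lt : ρ₁ < L := by linarith
  set R := ∑ k ∈ Icc 1 (p - 1), ((k : ℝ) + 1) * Λ k * ρ₁ ^ k
  set S := ∑ k ∈ Icc 1 (p - 1), Λ k * ρ₁ ^ (k + 1)
  have hS : 0 ≤ S := sum_nonneg fun k hk => mul_nonneg (hΛ k hk) (by positivity)
  have hR : 0 ≤ ρ₁ * R :=
    mul_nonneg hr.le (sum_nonneg fun k hk => by have := hΛ k hk; positivity)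
  have hSR := two_mul_sum_mul_pow_succ_le hr.le (fun k hk => (mem_Icc.mp hk).1) hΛ
  have hc : 0 < L ^ 3 - L := by nlinarith
  have hroot' : (L ^ 3 - L) * (ρ₁ / (L - ρ₁)) = L ^ 2 * ρ₁ - ρ₁ * R := by
    rw [← hroot]
    field_simp [(sub_pos.mpr hr_lt).ne']
    ring
  have hcancel : (L ^ 3 - L) * (ρ₁ / L) = (L ^ 2 - 1) * ρ₁ := by
    field_simp
  have lower := mul_lt_mul_of_pos_left (neg_div_sub_lt_log_one_sub_div hr hr_lt) hc
  have upper := mul_lt_mul_of_pos_left (log_one_sub_div_lt hr hr_lt) hc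
  have hσ_pos : 0 < σ₁ := by rw [hσ₁]; linarith
  have hσ_lt : σ₁ < 1 / L := by rw [hσ₁]; linarith
  exact ⟨hσ_pos, hσ_lt, hσ_lt.trans hL1⟩

theorem stmt12 (p : ℕ) (hp : 0 < p) (Λ : ℕ → ℝ) (hΛ0 : 1 < Λ 0)
    (hΛ : ∀ k ∈ Finset.Icc 1 (p - 1), 0 ≤ Λ k)
    (ρ₁ : ℝ) (hρ₁ : ρ₁ ∈ Set.Ioc 0 (1 / Λ 0))
    (hroot : Λ 0 * (1 - Λ 0 * ρ₁) / (Λ 0 - ρ₁)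
      = ∑ k ∈ Finset.Icc 1 (p - 1), ((k : ℝ) + 1) * Λ k * ρ₁ ^ k)
    (σ₁ : ℝ)
    (hσ₁ : σ₁ = (Λ 0) ^ 2 * ρ₁
      - (∑ k ∈ Finset.Icc 1 (p - 1), Λ k * ρ₁ ^ (k + 1))
      + ((Λ 0) ^ 3 - Λ 0) * Real.log (1 - ρ₁ / Λ 0)) :
    0 < σ₁ ∧ σ₁ < 1 / Λ 0 ∧ σ₁ < 1 :=
  stmt12_general p Λ hΛ0 hΛ ρ₁ hρ₁ hroot σ₁ hσ₁
end

section
/- Let M₀,…,M_{p-1} > 1, each A_k analytic on U with A_k(0)=0, A_k'(0)=1, |A_k(z)| ≤ M_k on U, and ρ₃ ∈ (0,1) as in the Landau theorem. Then for every z with |z| = ρ₃, |Σ_{k=0}^{p-1} conj(z)^k A_k(z)| ≥ ρ₃ - ρ₃²(1-ρ₃^{p-1})/(1-ρ₃) - Σ_{k=0}^{p-1}(M_k - 1/M_k)·ρ₃^{k+2}/(1-ρ₃). -/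
/-!
Write `A_k(z) = z + E_k(z)`. The terms `conj(z)^k z` contribute at least
`ρ - (ρ² + ⋯ + ρ^p) = ρ - ρ²(1 - ρ^{p-1})/(1 - ρ)`, and each error term is controlled by a
pointwise Landau estimate `|E_k(z)| ≤ (M_k - 1/M_k) ρ²/(1 - ρ)`. For the latter, `h = A_k(z)/z`
is bounded by `M_k` with `h(0) = 1`, and the Schwarz lemma applied to the Möbius-type map
`M_k (h - 1)/(M_k² - h)` of the unit disk into itself yields
`|h(z) - 1| ≤ (M_k² - 1)|z|/(M_k - |z|)`.
-/

open Metric Set Finset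

section Landau

variable {M : ℝ}

/-- `w ↦ M (w - 1) / (M² - w)` maps the closed disk of radius `M` into the closed unit disk. -/
lemma mul_norm_sub_one_le_norm_sq_sub {w : ℂ} (hM : 1 ≤ M) (hw : ‖w‖ ≤ M) :
    M * ‖w - 1‖ ≤ ‖(M : ℂ) ^ 2 - w‖ := by
  have key : (M * ‖w - 1‖) ^ 2 ≤ ‖(M : ℂ) ^ 2 - w‖ ^ 2 := by
    have hw2 : w.re * w.re + w.im * w.im ≤ M ^ 2 := by
      rw [← Complex.normSq_apply, ← Complex.sq_norm]; gcongr
    rw [mul_pow, Complex.sq_norm, Complex.sq_norm, Complex.normSq_apply, Complex.normSq_apply]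
    have hM2 : ((M : ℂ) ^ 2).re = M ^ 2 ∧ ((M : ℂ) ^ 2).im = 0 := by
      constructor <;> simp [pow_two]
    simp only [Complex.sub_re, Complex.sub_im, Complex.one_re, Complex.one_im, hM2]
    -- the difference of the two sides is `(M² - 1)(M² - |w|²)`
    nlinarith [mul_nonneg (by nlinarith : (0 : ℝ) ≤ M ^ 2 - 1) (sub_nonneg.mpr hw2)]
  exact le_of_pow_le_pow_left₀ two_ne_zero (norm_nonneg _) key

lemma norm_sub_one_le_of_norm_le {h : ℂ → ℂ} {z : ℂ} (hM : 1 < M)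
    (hd : DifferentiableOn ℂ h (ball 0 1)) (h0 : h 0 = 1) (hb : ∀ w ∈ ball (0 : ℂ) 1, ‖h w‖ ≤ M)
    (hz : z ∈ ball (0 : ℂ) 1) :
    ‖h z - 1‖ ≤ (M ^ 2 - 1) * ‖z‖ / (M - ‖z‖) := by
  have hz1 : ‖z‖ < 1 := mem_ball_zero_iff.mp hz
  have hden : ∀ w ∈ ball (0 : ℂ) 1, (M : ℂ) ^ 2 - h w ≠ 0 := fun w hw => sub_ne_zero.mpr
    fun heq => by
      have : ‖(M : ℂ) ^ 2‖ ≤ M := heq ▸ hb w hw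
      rw [norm_pow, Complex.norm_real, Real.norm_of_nonneg (by linarith)] at this
      nlinarith
  set g : ℂ → ℂ := fun w => M * (h w - 1) / ((M : ℂ) ^ 2 - h w)
  have hgd : DifferentiableOn ℂ g (ball 0 1) :=
    ((differentiableOn_const _).mul (hd.sub_const 1)).div ((differentiableOn_const _).sub hd) hden
  have hgU : MapsTo g (ball 0 1) (closedBall 0 1) := fun w hw => by
    rw [mem_closedBall_zero_iff, norm_div, div_le_one (norm_pos_iff.mpr (hden w hw)), norm_mul,
      Complex.norm_real, Real.norm_of_nonneg (by linarith)]
    exact mul_norm_sub_one_le_norm_sq_sub hM.le (hb w hw)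
  have hgz : ‖g z‖ ≤ ‖z‖ := Complex.norm_le_norm_of_mapsTo_ball hgd hgU (by simp [g, h0]) hz1
  have hnum : M * ‖h z - 1‖ ≤ ‖z‖ * ‖(M : ℂ) ^ 2 - h z‖ := by
    have hpos := norm_pos_iff.mpr (hden z hz)
    rwa [norm_div, div_le_iff₀ hpos, norm_mul, Complex.norm_real,
      Real.norm_of_nonneg (by linarith)] at hgz
  have htri : ‖(M : ℂ) ^ 2 - h z‖ ≤ (M ^ 2 - 1) + ‖h z - 1‖ := by
    have : (M : ℂ) ^ 2 - h z = ((M ^ 2 - 1 : ℝ) : ℂ) - (h z - 1) := by push_cast; ring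
    rw [this]
    refine (norm_sub_le _ _).trans_eq ?_
    rw [Complex.norm_real, Real.norm_of_nonneg (by nlinarith)]
  rw [le_div_iff₀ (by linarith)]
  nlinarith [mul_le_mul_of_nonneg_left htri (norm_nonneg z)]

lemma norm_sub_self_le_of_norm_le {f : ℂ → ℂ} {z : ℂ} (hM : 1 < M)
    (hd : DifferentiableOn ℂ f (ball 0 1)) (h0 : f 0 = 0) (h1 : deriv f 0 = 1)
    (hb : ∀ w ∈ ball (0 : ℂ) 1, ‖f w‖ ≤ M) (hz : z ∈ ball (0 : ℂ) 1) :
    ‖f z - z‖ ≤ (M - 1 / M) * ‖z‖ ^ 2 / (1 - ‖z‖) := by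
  have hz1 : ‖z‖ < 1 := mem_ball_zero_iff.mp hz
  have hfU : MapsTo f (ball 0 1) (closedBall (f 0) M) := fun w hw => by
    simpa [h0] using hb w hw
  have hslope := norm_sub_one_le_of_norm_le hM
    ((Complex.differentiableOn_dslope (ball_mem_nhds 0 one_pos)).mpr hd) (by rw [dslope_same, h1])
    (fun w hw => by simpa using Complex.norm_dslope_le_div_of_mapsTo_ball hd hfU hw) hz
  have hfz : f z - z = z * (dslope f 0 z - 1) := by
    have := sub_smul_dslope f 0 z
    rw [sub_zero, h0, sub_zero, smul_eq_mul] at this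
    rw [← this]
    ring
  calc ‖f z - z‖ = ‖z‖ * ‖dslope f 0 z - 1‖ := by rw [hfz, norm_mul]
    _ ≤ ‖z‖ * ((M ^ 2 - 1) * ‖z‖ / (M - ‖z‖)) := by gcongr
    _ = (M - 1 / M) * ‖z‖ ^ 2 / ((M - ‖z‖) / M) := by field_simp
    _ ≤ (M - 1 / M) * ‖z‖ ^ 2 / (1 - ‖z‖) := by
      have : 0 ≤ M - 1 / M := by
        rw [sub_nonneg, div_le_iff₀ (by linarith)]; nlinarith
      gcongr
      rw [le_div_iff₀ (by linarith)]
      nlinarith [norm_nonneg z]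

end Landau

lemma sub_le_norm_geom_sum_mul {w z : ℂ} (hw : ‖w‖ ≤ ‖z‖) (hz : ‖z‖ ≠ 1) (n : ℕ) :
    ‖z‖ - ‖z‖ ^ 2 * ((1 - ‖z‖ ^ n) / (1 - ‖z‖)) ≤ ‖∑ k ∈ range (n + 1), w ^ k * z‖ := by
  have htail : ‖∑ k ∈ range n, w ^ (k + 1) * z‖ ≤ ‖z‖ ^ 2 * ((1 - ‖z‖ ^ n) / (1 - ‖z‖)) := by
    rw [← neg_div_neg_eq, neg_sub, neg_sub, ← geom_sum_eq hz, mul_sum]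
    refine (norm_sum_le _ _).trans (sum_le_sum fun k _ => ?_)
    rw [norm_mul, norm_pow]
    calc ‖w‖ ^ (k + 1) * ‖z‖ ≤ ‖z‖ ^ (k + 1) * ‖z‖ := by gcongr
      _ = ‖z‖ ^ 2 * ‖z‖ ^ k := by ring
  rw [sum_range_succ', pow_zero, one_mul, add_comm]
  linarith [norm_sub_le_norm_add z (∑ k ∈ range n, w ^ (k + 1) * z)]

theorem stmt15 (p : ℕ) (hp : 0 < p) (M : ℕ → ℝ)
    (hM : ∀ k ∈ Finset.range p, 1 < M k)
    (A : ℕ → ℂ → ℂ)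
    (hA : ∀ k ∈ Finset.range p, DifferentiableOn ℂ (A k) (Metric.ball 0 1))
    (hA0 : ∀ k ∈ Finset.range p, A k 0 = 0)
    (hA'0 : ∀ k ∈ Finset.range p, deriv (A k) 0 = 1)
    (hAM : ∀ k ∈ Finset.range p, ∀ z ∈ Metric.ball (0 : ℂ) 1, ‖A k z‖ ≤ M k)
    (ρ₃ : ℝ) (hρ₃ : ρ₃ ∈ Set.Ioo (0 : ℝ) 1) :
    ∀ z : ℂ, ‖z‖ = ρ₃ →
      ρ₃ - ρ₃ ^ 2 * ((1 - ρ₃ ^ (p - 1)) / (1 - ρ₃))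
        - (∑ k ∈ Finset.range p, (M k - 1 / M k) * ρ₃ ^ (k + 2) / (1 - ρ₃))
      ≤ ‖∑ k ∈ Finset.range p, (starRingEnd ℂ z) ^ k * A k z‖ := by
  obtain ⟨-, hρ1⟩ := hρ₃
  intro z hz
  subst hz
  obtain ⟨n, rfl⟩ : ∃ n, p = n + 1 := Nat.exists_eq_add_one.mpr hp
  have hzU : z ∈ ball (0 : ℂ) 1 := mem_ball_zero_iff.mpr hρ1
  have hconj : ‖starRingEnd ℂ z‖ = ‖z‖ := Complex.norm_conj z
  have hmain := sub_le_norm_geom_sum_mul hconj.le hρ1.ne n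
  have herr : ‖∑ k ∈ range (n + 1), starRingEnd ℂ z ^ k * (A k z - z)‖
      ≤ ∑ k ∈ range (n + 1), (M k - 1 / M k) * ‖z‖ ^ (k + 2) / (1 - ‖z‖) := by
    refine (norm_sum_le _ _).trans (sum_le_sum fun k hk => ?_)
    calc ‖starRingEnd ℂ z ^ k * (A k z - z)‖ = ‖z‖ ^ k * ‖A k z - z‖ := by
          rw [norm_mul, norm_pow, hconj]
      _ ≤ ‖z‖ ^ k * ((M k - 1 / M k) * ‖z‖ ^ 2 / (1 - ‖z‖)) := by
          gcongr
          exact norm_sub_self_le_of_norm_le (hM k hk) (hA k hk) (hA0 k hk) (hA'0 k hk)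
            (hAM k hk) hzU
      _ = (M k - 1 / M k) * ‖z‖ ^ (k + 2) / (1 - ‖z‖) := by ring
  have hsplit : ∑ k ∈ range (n + 1), starRingEnd ℂ z ^ k * A k z
      = ∑ k ∈ range (n + 1), starRingEnd ℂ z ^ k * z
        + ∑ k ∈ range (n + 1), starRingEnd ℂ z ^ k * (A k z - z) := by
    rw [← sum_add_distrib]
    exact sum_congr rfl fun k _ => by ring
  rw [hsplit, Nat.add_sub_cancel]
  linarith [norm_sub_le_norm_add (∑ k ∈ range (n + 1), starRingEnd ℂ z ^ k * z)
    (∑ k ∈ range (n + 1), starRingEnd ℂ z ^ k * (A k z - z))]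
end

section
/- Suppose 0 < σ < 1, 0 < ρ ≤ 1, f is continuous and nonvanishing on U_ρ with f(0) = 1, F = log f is well-defined on U_ρ, f is injective on U_ρ, and F(U_ρ) ⊇ {|w| < σ}. Then f(U_ρ) contains the open disk centered at cosh σ of radius sinh σ. -/
/-!
Write `w = exp ζ` with `ζ = x + iy`, `|y| ≤ π`. Since `cosh σ ± sinh σ = e^{±σ}`, the disc
`|w - cosh σ| < sinh σ` is `|w|² + 1 < 2 cosh σ · Re w`, i.e. `cosh x < cosh σ · cos y`.
On the other hand `cos y · cosh |ζ| ≤ cos y · cosh x · cosh y ≤ cosh x`, because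
`cosh √(x² + y²) ≤ cosh x cosh y` and `cos y cosh y ≤ 1` for `|y| ≤ π`. Hence `|ζ| < σ`:
`exp` maps the disc `|ζ| < σ` onto a set containing `U(cosh σ, sinh σ)`, and `f = exp ∘ F`.
-/

open Real

lemma sin_mul_cosh_sub_cos_mul_sinh_nonneg {y : ℝ} (h0 : 0 ≤ y) (hπ : y ≤ π) :
    0 ≤ sin y * cosh y - cos y * sinh y := by
  have hderiv (t : ℝ) : HasDerivAt (fun t ↦ sin t * cosh t - cos t * sinh t)
      (2 * sin t * sinh t) t :=
    (((hasDerivAt_sin t).mul (hasDerivAt_cosh t)).sub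
      ((hasDerivAt_cos t).mul (hasDerivAt_sinh t))).congr_deriv (by ring)
  have hmono : MonotoneOn (fun t ↦ sin t * cosh t - cos t * sinh t) (Set.Icc 0 π) := by
    refine monotoneOn_of_hasDerivWithinAt_nonneg (convex_Icc 0 π)
      (by fun_prop) (fun t _ ↦ (hderiv t).hasDerivWithinAt) fun t ht ↦ ?_
    rw [interior_Icc] at ht
    have := sin_nonneg_of_nonneg_of_le_pi ht.1.le ht.2.le
    have := sinh_nonneg_iff.2 ht.1.le
    positivity
  simpa using hmono ⟨le_rfl, pi_pos.le⟩ ⟨h0, hπ⟩ h0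

lemma cos_mul_cosh_le_one {y : ℝ} (hy : |y| ≤ π) : cos y * cosh y ≤ 1 := by
  have hderiv (t : ℝ) : HasDerivAt (fun t ↦ cos t * cosh t)
      (-(sin t * cosh t - cos t * sinh t)) t :=
    ((hasDerivAt_cos t).mul (hasDerivAt_cosh t)).congr_deriv (by ring)
  have hanti : AntitoneOn (fun t ↦ cos t * cosh t) (Set.Icc 0 π) := by
    refine antitoneOn_of_hasDerivWithinAt_nonpos (convex_Icc 0 π)
      (by fun_prop) (fun t _ ↦ (hderiv t).hasDerivWithinAt) fun t ht ↦ ?_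
    rw [interior_Icc] at ht
    exact neg_nonpos.2 (sin_mul_cosh_sub_cos_mul_sinh_nonneg ht.1.le ht.2.le)
  rw [← cos_abs, ← cosh_abs]
  simpa using hanti ⟨le_rfl, pi_pos.le⟩ ⟨abs_nonneg y, hy⟩ (abs_nonneg y)

/- `u ↦ cosh √u` is a power series in `u` with nonnegative coefficients, hence convex, and
`x² + y²` is the mean of `(x + y)²` and `(x - y)²`; we compare the series termwise. -/
lemma cosh_sqrt_sq_add_sq_le (x y : ℝ) : cosh √(x ^ 2 + y ^ 2) ≤ cosh x * cosh y := by
  have hprod : cosh x * cosh y = (cosh (x + y) + cosh (x - y)) / 2 := by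
    rw [cosh_add, cosh_sub]; ring
  rw [hprod]
  refine hasSum_le (fun n ↦ ?_) (hasSum_cosh _)
    (((hasSum_cosh _).add (hasSum_cosh _)).div_const 2)
  have hmean : (1 / 2 : ℝ) • (x + y) ^ 2 + (1 / 2 : ℝ) • (x - y) ^ 2 = x ^ 2 + y ^ 2 := by
    simp only [smul_eq_mul]; ring
  have hpow := (convexOn_pow n).2 (sq_nonneg (x + y)) (sq_nonneg (x - y))
    (by norm_num : (0 : ℝ) ≤ 1 / 2) (by norm_num : (0 : ℝ) ≤ 1 / 2) (by norm_num)
  rw [hmean] at hpow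
  rw [pow_mul, sq_sqrt (by positivity), pow_mul, pow_mul]
  calc (x ^ 2 + y ^ 2) ^ n / (2 * n).factorial
      ≤ (1 / 2 * ((x + y) ^ 2) ^ n + 1 / 2 * ((x - y) ^ 2) ^ n) / (2 * n).factorial := by
        gcongr
        simpa only [smul_eq_mul] using hpow
    _ = _ := by ring

lemma cos_im_mul_cosh_norm_le_cosh_re {ζ : ℂ} (h : |ζ.im| ≤ π) :
    cos ζ.im * cosh ‖ζ‖ ≤ cosh ζ.re := by
  rcases le_or_gt (cos ζ.im) 0 with hcos | hcos
  · nlinarith [cosh_pos ‖ζ‖, cosh_pos ζ.re]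
  calc cos ζ.im * cosh ‖ζ‖
      ≤ cos ζ.im * (cosh ζ.re * cosh ζ.im) := by
        rw [Complex.norm_eq_sqrt_sq_add_sq]
        exact mul_le_mul_of_nonneg_left (cosh_sqrt_sq_add_sq_le _ _) hcos.le
    _ = cosh ζ.re * (cos ζ.im * cosh ζ.im) := by ring
    _ ≤ cosh ζ.re := mul_le_of_le_one_right (cosh_pos _).le (cos_mul_cosh_le_one h)

lemma norm_lt_of_cosh_re_lt {σ : ℝ} (hσ : 0 < σ) {ζ : ℂ} (him : |ζ.im| ≤ π)
    (h : cosh ζ.re < cosh σ * cos ζ.im) : ‖ζ‖ < σ := by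
  have hcos : 0 < cos ζ.im := pos_of_mul_pos_right ((cosh_pos _).trans h) (cosh_pos σ).le
  have hle := cos_im_mul_cosh_norm_le_cosh_re him
  have hlt : cosh ‖ζ‖ < cosh σ := by nlinarith
  simpa [abs_of_pos hσ] using cosh_lt_cosh.1 hlt

lemma cosh_re_lt_of_exp_mem_ball {σ : ℝ} {ζ : ℂ}
    (h : Complex.exp ζ ∈ Metric.ball (cosh σ : ℂ) (sinh σ)) :
    cosh ζ.re < cosh σ * cos ζ.im := by
  rw [Metric.mem_ball, Complex.dist_eq] at h
  have hsq := pow_lt_pow_left₀ h (norm_nonneg _) two_ne_zero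
  rw [Complex.sq_norm, Complex.normSq_apply] at hsq
  simp only [Complex.sub_re, Complex.sub_im, Complex.exp_re, Complex.exp_im,
    Complex.ofReal_re, Complex.ofReal_im, sub_zero] at hsq
  have hcosh : 2 * cosh ζ.re * exp ζ.re = exp ζ.re * exp ζ.re + 1 := by
    rw [cosh_eq, exp_neg]; field_simp
  have hexp := exp_pos ζ.re
  nlinarith [sin_sq_add_cos_sq ζ.im, cosh_sq_sub_sinh_sq σ]

lemma ball_cosh_sinh_subset_exp_image_ball {σ : ℝ} (hσ : 0 < σ) :
    Metric.ball (cosh σ : ℂ) (sinh σ) ⊆ Complex.exp '' Metric.ball 0 σ := by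
  intro w hw
  have hw0 : w ≠ 0 := by
    rintro rfl
    rw [Metric.mem_ball, dist_zero_left, Complex.norm_real, norm_of_nonneg (cosh_pos σ).le] at hw
    exact (sinh_lt_cosh σ).not_gt hw
  refine ⟨Complex.log w, mem_ball_zero_iff.2 ?_, Complex.exp_log hw0⟩
  refine norm_lt_of_cosh_re_lt hσ (by rw [Complex.log_im]; exact Complex.abs_arg_le_pi w) ?_
  exact cosh_re_lt_of_exp_mem_ball (by rwa [Complex.exp_log hw0])

theorem stmt16_general (σ ρ : ℝ) (hσ0 : 0 < σ)
    (f F : ℂ → ℂ)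
    (hFlog : ∀ z ∈ Metric.ball (0 : ℂ) ρ, Complex.exp (F z) = f z)
    (hcover : Metric.ball (0 : ℂ) σ ⊆ F '' (Metric.ball 0 ρ)) :
    Metric.ball ((Real.cosh σ : ℂ)) (Real.sinh σ) ⊆ f '' (Metric.ball 0 ρ) := by
  intro w hw
  obtain ⟨ζ, hζ, rfl⟩ := ball_cosh_sinh_subset_exp_image_ball hσ0 hw
  obtain ⟨z, hz, rfl⟩ := hcover hζ
  exact ⟨z, hz, (hFlog z hz).symm⟩

theorem stmt16 (σ ρ : ℝ) (hσ0 : 0 < σ) (hσ1 : σ < 1) (hρ0 : 0 < ρ) (hρ1 : ρ ≤ 1)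
    (f F : ℂ → ℂ)
    (hf : ContinuousOn f (Metric.ball 0 ρ))
    (hf0 : f 0 = 1)
    (hfne : ∀ z ∈ Metric.ball (0 : ℂ) ρ, f z ≠ 0)
    (hF0 : F 0 = 0)
    (hFlog : ∀ z ∈ Metric.ball (0 : ℂ) ρ, Complex.exp (F z) = f z)
    (hinj : Set.InjOn f (Metric.ball 0 ρ))
    (hcover : Metric.ball (0 : ℂ) σ ⊆ F '' (Metric.ball 0 ρ)) :
    Metric.ball ((Real.cosh σ : ℂ)) (Real.sinh σ) ⊆ f '' (Metric.ball 0 ρ) :=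
  stmt16_general σ ρ hσ0 f F hFlog hcover
end

section
/- The image of the open disk {w ∈ ℂ : |w| < σ} under the exponential map contains the open disk centered at cosh σ with radius sinh σ, for any 0 < σ < 1. -/
/-!
Write `ζ = exp (t + φ i)` with `|φ| ≤ π`. Expanding `|ζ - cosh σ|² < sinh σ²` with
`cosh² - sinh² = 1` shows that `ζ` lies in the disk iff `cosh t < cosh σ · cos φ`.
Since `tanh u ≤ u`, the function `log cosh` increases by at most `(σ² - t²) / 2` from `|t|`
to `|σ|`; since `φ ≤ tan φ`, `log cos φ ≤ -φ² / 2` for `|φ| ≤ π / 2`. Hence `t² + φ² ≥ σ²`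
would force `cosh σ · cos φ ≤ cosh t`.
-/

open Set

namespace Real

theorem sinh_le_mul_cosh {x : ℝ} (hx : 0 ≤ x) : sinh x ≤ x * cosh x := by
  have hmono : MonotoneOn (fun u => u * cosh u - sinh u) (Ici 0) := by
    refine monotoneOn_of_hasDerivWithinAt_nonneg (f' := fun u => u * sinh u) (convex_Ici 0)
      (by fun_prop) (fun u _ => ?_) (fun u hu => ?_)
    · exact ((((hasDerivAt_id u).mul (hasDerivAt_cosh u)).sub
        (hasDerivAt_sinh u)).congr_deriv (by simp)).hasDerivWithinAt
    · rw [interior_Ici] at hu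
      exact mul_nonneg (le_of_lt hu) (sinh_nonneg_iff.2 (le_of_lt hu))
  simpa using hmono self_mem_Ici hx hx

theorem antitoneOn_cosh_mul_exp_neg_sq_div_two :
    AntitoneOn (fun u => cosh u * exp (-(u ^ 2 / 2))) (Ici 0) := by
  refine antitoneOn_of_hasDerivWithinAt_nonpos
    (f' := fun u => (sinh u - u * cosh u) * exp (-(u ^ 2 / 2))) (convex_Ici 0) (by fun_prop)
    (fun u _ => ?_) (fun u hu => ?_)
  · exact (((hasDerivAt_cosh u).mul ((((hasDerivAt_pow 2 u).div_const 2).neg).exp)).congr_deriv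
      (by simp only [Pi.neg_apply]; push_cast; ring)).hasDerivWithinAt
  · rw [interior_Ici] at hu
    exact mul_nonpos_of_nonpos_of_nonneg (sub_nonpos.2 (sinh_le_mul_cosh (le_of_lt hu)))
      (exp_pos _).le

theorem cosh_le_cosh_mul_exp {s t : ℝ} (h : |t| ≤ |s|) :
    cosh s ≤ cosh t * exp ((s ^ 2 - t ^ 2) / 2) := by
  have key := antitoneOn_cosh_mul_exp_neg_sq_div_two (abs_nonneg t) (abs_nonneg s) h
  simp only [cosh_abs, sq_abs] at key
  calc cosh s = cosh s * exp (-(s ^ 2 / 2)) * exp (s ^ 2 / 2) := by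
        rw [mul_assoc, ← exp_add]; simp
    _ ≤ cosh t * exp (-(t ^ 2 / 2)) * exp (s ^ 2 / 2) := by gcongr
    _ = cosh t * exp ((s ^ 2 - t ^ 2) / 2) := by rw [mul_assoc, ← exp_add]; ring_nf

theorem antitoneOn_cos_mul_exp_sq_div_two :
    AntitoneOn (fun x => cos x * exp (x ^ 2 / 2)) (Icc 0 (π / 2)) := by
  refine antitoneOn_of_hasDerivWithinAt_nonpos
    (f' := fun x => (x * cos x - sin x) * exp (x ^ 2 / 2)) (convex_Icc 0 (π / 2)) (by fun_prop)
    (fun x _ => ?_) (fun x hx => ?_)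
  · exact (((hasDerivAt_cos x).mul (((hasDerivAt_pow 2 x).div_const 2).exp)).congr_deriv
      (by push_cast; ring)).hasDerivWithinAt
  · rw [interior_Icc] at hx
    have hcos : 0 < cos x := cos_pos_of_mem_Ioo ⟨by linarith [hx.1, pi_pos], hx.2⟩
    have htan := le_tan hx.1.le hx.2
    rw [tan_eq_sin_div_cos, le_div_iff₀ hcos] at htan
    exact mul_nonpos_of_nonpos_of_nonneg (sub_nonpos.2 htan) (exp_pos _).le

theorem cos_le_exp_neg_sq_div_two {x : ℝ} (hx : |x| ≤ π / 2) :
    cos x ≤ exp (-(x ^ 2 / 2)) := by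
  have key := antitoneOn_cos_mul_exp_sq_div_two ⟨le_rfl, pi_div_two_pos.le⟩
    ⟨abs_nonneg x, hx⟩ (abs_nonneg x)
  simp only [cos_abs, sq_abs, cos_zero, one_mul, ne_eq, OfNat.ofNat_ne_zero, not_false_eq_true,
    zero_pow, zero_div, exp_zero] at key
  rwa [exp_neg, ← one_div, le_div_iff₀ (exp_pos _)]

theorem sq_add_sq_lt_sq_of_cosh_lt_cosh_mul_cos {s t φ : ℝ} (hφ : |φ| ≤ π)
    (h : cosh t < cosh s * cos φ) : t ^ 2 + φ ^ 2 < s ^ 2 := by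
  have hcos : 0 < cos φ := pos_of_mul_pos_right ((cosh_pos t).trans h) (cosh_pos s).le
  by_contra! hge
  obtain hts | hst := le_or_gt |t| |s|
  · have hφ' : |φ| ≤ π / 2 := by
      by_contra! hlt
      exact hcos.not_ge (cos_abs φ ▸ cos_nonpos_of_pi_div_two_le_of_le hlt.le (by linarith))
    have : cosh s * cos φ ≤ cosh t := calc
      cosh s * cos φ ≤ cosh t * exp ((s ^ 2 - t ^ 2) / 2) * exp (-(φ ^ 2 / 2)) := by
        gcongr
        · exact cosh_le_cosh_mul_exp hts
        · exact cos_le_exp_neg_sq_div_two hφ'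
      _ ≤ cosh t := by
        rw [mul_assoc, ← exp_add]
        exact mul_le_of_le_one_right (cosh_pos t).le (exp_le_one_iff.2 (by linarith))
    exact this.not_gt h
  · have : cosh s ≤ cosh t := cosh_le_cosh.2 hst.le
    nlinarith [cos_le_one φ, cosh_pos s]

end Real

namespace Complex

theorem cosh_re_lt_cosh_mul_cos_im_of_exp_mem_ball {w : ℂ} {s : ℝ}
    (h : exp w ∈ Metric.ball (Real.cosh s : ℂ) (Real.sinh s)) :
    Real.cosh w.re < Real.cosh s * Real.cos w.im := by
  rw [Metric.mem_ball, dist_eq] at h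
  have hsq := pow_lt_pow_left₀ h (norm_nonneg _) two_ne_zero
  rw [Complex.sq_norm, normSq_apply] at hsq
  simp only [sub_re, sub_im, ofReal_re, ofReal_im, sub_zero, exp_re, exp_im] at hsq
  have hcosh : 2 * Real.cosh w.re * Real.exp w.re = Real.exp w.re ^ 2 + 1 := by
    rw [Real.cosh_eq, Real.exp_neg]; field_simp
  nlinarith [Real.cosh_sq_sub_sinh_sq s, Real.sin_sq_add_cos_sq w.im, Real.exp_pos w.re]

theorem norm_lt_of_exp_mem_ball_cosh_sinh {w : ℂ} {s : ℝ} (hw : |w.im| ≤ Real.pi)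
    (h : exp w ∈ Metric.ball (Real.cosh s : ℂ) (Real.sinh s)) : ‖w‖ < s := by
  have hs : 0 < s := Real.sinh_pos_iff.1 (dist_nonneg.trans_lt h)
  have hsq := Real.sq_add_sq_lt_sq_of_cosh_lt_cosh_mul_cos hw
    (cosh_re_lt_cosh_mul_cos_im_of_exp_mem_ball h)
  rw [norm_eq_sqrt_sq_add_sq]
  exact (Real.sqrt_lt' hs).2 hsq

end Complex

theorem stmt17_general (σ : ℝ) :
    Metric.ball ((Real.cosh σ : ℂ)) (Real.sinh σ) ⊆
      Complex.exp '' (Metric.ball 0 σ) := by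
  intro ζ hζ
  have hζ0 : ζ ≠ 0 := by
    rintro rfl
    rw [Metric.mem_ball, dist_zero_left, Complex.norm_real,
      Real.norm_of_nonneg (Real.cosh_pos σ).le] at hζ
    exact (Real.sinh_lt_cosh σ).not_gt hζ
  refine ⟨Complex.log ζ, mem_ball_zero_iff.2 ?_, Complex.exp_log hζ0⟩
  rw [← Complex.exp_log hζ0] at hζ
  exact Complex.norm_lt_of_exp_mem_ball_cosh_sinh (Complex.log_im ζ ▸ Complex.abs_arg_le_pi ζ) hζ

theorem stmt17 (σ : ℝ) (hσ0 : 0 < σ) (hσ1 : σ < 1) :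
    Metric.ball ((Real.cosh σ : ℂ)) (Real.sinh σ) ⊆
      Complex.exp '' (Metric.ball 0 σ) :=
  stmt17_general σ
end
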